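/- Let S be a set of primes and for z > e let S_z = {p ∈ S : p ≤ z}. Assume that the sum of 1/p over p ∈ S_z is at most β·log log z + C for some constants β, C > 0. Let N_z denote the set of positive integers all of whose prime factors lie in S_z. Then for every η ≥ 1, the sum of 1/n over n ∈ N_z with ω(n) ≥ η·β·log log z is at most a constant (depending only on C and η) times (log z)^{β(η − η log η)}. -/

import Mathlib

/-!
Rankin's trick. For `η ≥ 1` and `ω(n) ≥ T` we have `1/n ≤ η^(ω(n)) / (n η^T)`, so the sum
is at most `η^(-T)` times the sum of `η^(ω(n))/n` over all `n` whose prime factors lie in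
`S_z`. That sum is the Euler product `∏_{p ∈ S_z} (1 + η/(p-1))`, which is at most
`exp(η (∑_{p ∈ S_z} 1/p + 2))`, the `2` coming from `1/(p-1) - 1/p ≤ 2/p²` and
`∑_{n ≥ 2} 1/n² ≤ 1`. With `T = η β log log z` the hypothesis turns
`exp(η β log log z) · η^(-T)` into `(log z)^(β (η - η log η))`.
-/

open Finset Real

theorem Nat.Coprime.card_primeFactors_mul {a b : ℕ} (hab : a.Coprime b) :
    (a * b).primeFactors.card = a.primeFactors.card + b.primeFactors.card := by
  rw [hab.primeFactors_mul, card_union_of_disjoint hab.disjoint_primeFactors]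

noncomputable def rankinWeight (α : ℝ) (n : ℕ) : ℝ := α ^ n.primeFactors.card / n

section RankinWeight

variable {α : ℝ}

theorem rankinWeight_nonneg (hα : 0 ≤ α) (n : ℕ) : 0 ≤ rankinWeight α n := by
  unfold rankinWeight; positivity

theorem rankinWeight_one (α : ℝ) : rankinWeight α 1 = 1 := by
  simp [rankinWeight]

theorem rankinWeight_mul (α : ℝ) {m n : ℕ} (hmn : m.Coprime n) :
    rankinWeight α (m * n) = rankinWeight α m * rankinWeight α n := by
  simp only [rankinWeight, hmn.card_primeFactors_mul, pow_add, Nat.cast_mul, mul_div_mul_comm]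

theorem rankinWeight_prime_pow_succ {p : ℕ} (hp : p.Prime) (e : ℕ) :
    rankinWeight α (p ^ (e + 1)) = α / p * ((p : ℝ)⁻¹) ^ e := by
  rw [rankinWeight, Nat.primeFactors_prime_pow e.succ_ne_zero hp, card_singleton]
  push_cast
  field_simp
  ring

theorem hasSum_rankinWeight_prime_pow {p : ℕ} (hp : p.Prime) :
    HasSum (fun e ↦ rankinWeight α (p ^ e)) (1 + α / (p - 1)) := by
  have hp1 : (1 : ℝ) < p := by exact_mod_cast hp.one_lt
  have hgeom := (hasSum_geometric_of_lt_one (by positivity) (inv_lt_one_of_one_lt₀ hp1)).mul_left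
    (α / p)
  have hsum : α / p * (1 - (p : ℝ)⁻¹)⁻¹ = α / (p - 1) := by
    have : (p : ℝ) - 1 ≠ 0 := by linarith
    field_simp
  rw [← hasSum_nat_add_iff' 1]
  simpa only [rankinWeight_prime_pow_succ hp, sum_range_one, pow_zero, rankinWeight_one,
    add_sub_cancel_left, hsum] using hgeom

theorem hasSum_rankinWeight_factoredNumbers (hα : 0 ≤ α) {s : Finset ℕ}
    (hs : ∀ p ∈ s, p.Prime) :
    HasSum (fun m : Nat.factoredNumbers s ↦ rankinWeight α m) (∏ p ∈ s, (1 + α / (p - 1))) := by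
  have h := (EulerProduct.summable_and_hasSum_factoredNumbers_prod_filter_prime_tsum
    (rankinWeight_one α) (rankinWeight_mul α) (fun hp ↦ ?_) s).2
  · rwa [filter_true_of_mem hs,
      prod_congr rfl fun p hp ↦ (hasSum_rankinWeight_prime_pow (hs p hp)).tsum_eq] at h
  · simp_rw [Real.norm_of_nonneg (rankinWeight_nonneg hα _)]
    exact (hasSum_rankinWeight_prime_pow hp).summable

end RankinWeight

theorem one_div_sub_one_le_one_div_add {x : ℝ} (hx : 2 ≤ x) :
    1 / (x - 1) ≤ 1 / x + 2 / x ^ 2 := by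
  have : 0 < x - 1 := by linarith
  rw [div_add_div _ _ (by positivity) (by positivity), div_le_div_iff₀ this (by positivity)]
  nlinarith

theorem sum_one_div_sub_one_le {s : Finset ℕ} (hs : ∀ p ∈ s, 2 ≤ p) :
    ∑ p ∈ s, 1 / ((p : ℝ) - 1) ≤ ∑ p ∈ s, 1 / (p : ℝ) + 2 := by
  have hsq : ∑ p ∈ s, ((p : ℝ) ^ 2)⁻¹ ≤ 1 := calc
    _ ≤ ∑ p ∈ Ioo 1 (s.sup id + 1), ((p : ℝ) ^ 2)⁻¹ :=
      sum_le_sum_of_subset_of_nonneg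
        (fun p hp ↦ mem_Ioo.2 ⟨hs p hp, Nat.lt_succ_of_le (le_sup (f := id) hp)⟩)
        (fun _ _ _ ↦ by positivity)
    _ ≤ 2 / ((1 : ℕ) + 1) := sum_Ioo_inv_sq_le _ _
    _ = 1 := by norm_num
  calc ∑ p ∈ s, 1 / ((p : ℝ) - 1)
      ≤ ∑ p ∈ s, (1 / (p : ℝ) + 2 * ((p : ℝ) ^ 2)⁻¹) := sum_le_sum fun p hp ↦ by
        simpa [div_eq_mul_inv] using
          one_div_sub_one_le_one_div_add (x := p) (by exact_mod_cast hs p hp)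
    _ ≤ ∑ p ∈ s, 1 / (p : ℝ) + 2 := by rw [sum_add_distrib, ← mul_sum]; linarith

theorem prod_one_add_div_sub_one_le_exp {α : ℝ} (hα : 0 ≤ α) {s : Finset ℕ}
    (hs : ∀ p ∈ s, 2 ≤ p) :
    ∏ p ∈ s, (1 + α / ((p : ℝ) - 1)) ≤ exp (α * (∑ p ∈ s, 1 / (p : ℝ) + 2)) := calc
  _ ≤ ∏ p ∈ s, exp (α / ((p : ℝ) - 1)) := by
      refine prod_le_prod (fun p hp ↦ ?_) fun p _ ↦ by linarith [add_one_le_exp (α / ((p : ℝ) - 1))]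
      have : (2 : ℝ) ≤ p := by exact_mod_cast hs p hp
      have : (0 : ℝ) < p - 1 := by linarith
      positivity
  _ = exp (α * ∑ p ∈ s, 1 / ((p : ℝ) - 1)) := by
      rw [← exp_sum, mul_sum]; simp only [mul_one_div]
  _ ≤ _ := exp_le_exp.2 (mul_le_mul_of_nonneg_left (sum_one_div_sub_one_le hs) hα)

theorem one_div_le_rankinWeight_div_rpow {η T : ℝ} (hη : 1 ≤ η) {n : ℕ}
    (hT : T ≤ n.primeFactors.card) : 1 / (n : ℝ) ≤ rankinWeight η n / η ^ T := by
  have hpow : η ^ T ≤ η ^ n.primeFactors.card := by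
    simpa using rpow_le_rpow_of_exponent_le hη hT
  rw [rankinWeight, div_right_comm]
  gcongr
  rw [le_div_iff₀ (by positivity)]
  simpa using hpow

theorem tsum_one_div_le_of_le_card_primeFactors {η T : ℝ} (hη : 1 ≤ η) {s : Finset ℕ}
    (hs : ∀ p ∈ s, p.Prime) {A : Set ℕ} (hA : A ⊆ Nat.factoredNumbers s)
    (hT : ∀ n ∈ A, T ≤ n.primeFactors.card) :
    ∑' n : A, 1 / (n : ℝ) ≤ exp (η * (∑ p ∈ s, 1 / (p : ℝ) + 2)) / η ^ T := by
  have hEuler := hasSum_rankinWeight_factoredNumbers (zero_le_one.trans hη) hs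
  have hsummableA : Summable fun n : A ↦ rankinWeight η n :=
    (hEuler.summable.comp_injective (Set.inclusion_injective hA) :)
  have hsummable : Summable fun n : A ↦ rankinWeight η n / η ^ T := hsummableA.div_const _
  have hle : ∀ n : A, 1 / (n : ℝ) ≤ rankinWeight η n / η ^ T :=
    fun n ↦ one_div_le_rankinWeight_div_rpow hη (hT n n.2)
  calc ∑' n : A, 1 / (n : ℝ)
      ≤ ∑' n : A, rankinWeight η n / η ^ T :=
        (hsummable.of_nonneg_of_le (fun _ ↦ by positivity) hle).tsum_le_tsum hle hsummable
    _ = (∑' n : A, rankinWeight η n) / η ^ T := tsum_div_const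
    _ ≤ (∑' m : Nat.factoredNumbers s, rankinWeight η m) / η ^ T := by
        gcongr
        exact hsummableA.tsum_le_tsum_of_inj (Set.inclusion hA) (Set.inclusion_injective hA)
          (fun _ _ ↦ rankinWeight_nonneg (zero_le_one.trans hη) _) (fun _ ↦ le_rfl)
          hEuler.summable
    _ ≤ _ := by
        rw [hEuler.tsum_eq]
        gcongr
        exact prod_one_add_div_sub_one_le_exp (zero_le_one.trans hη) fun p hp ↦ (hs p hp).two_le

open Classical Real in
theorem stmt_0_general (C η : ℝ) (hη : 1 ≤ η) :
    ∃ K : ℝ, 0 < K ∧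
      ∀ (S : Set ℕ), (∀ p ∈ S, Nat.Prime p) →
      ∀ β z : ℝ, 0 < β → Real.exp 1 < z →
      (∑ p ∈ (Finset.range (⌈z⌉₊ + 1)).filter (fun p => p ∈ S ∧ (p : ℝ) ≤ z),
          (1 : ℝ) / p) ≤ β * Real.log (Real.log z) + C →
      (∑' n : {n : ℕ // 0 < n ∧ (∀ p : ℕ, p.Prime → p ∣ n → p ∈ S ∧ (p : ℝ) ≤ z) ∧
            η * β * Real.log (Real.log z) ≤ (n.primeFactors.card : ℝ)},
          (1 : ℝ) / (n : ℕ))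
        ≤ K * (Real.log z) ^ (β * (η - η * Real.log η)) := by
  refine ⟨exp (η * (C + 2)), exp_pos _, fun S hS β z _ hz hsum ↦ ?_⟩
  set P := (range (⌈z⌉₊ + 1)).filter (fun p => p ∈ S ∧ (p : ℝ) ≤ z)
  have hlogz : 0 < log z := log_pos (by linarith [add_one_le_exp 1])
  have hP : ∀ p ∈ P, p.Prime := fun p hp ↦ hS p (mem_filter.1 hp).2.1
  have hA : {n : ℕ | 0 < n ∧ (∀ p : ℕ, p.Prime → p ∣ n → p ∈ S ∧ (p : ℝ) ≤ z) ∧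
      η * β * log (log z) ≤ n.primeFactors.card} ⊆ Nat.factoredNumbers P := by
    rintro n ⟨-, hn, -⟩
    refine Nat.mem_factoredNumbers'.2 fun p hp hpn ↦ mem_filter.2 ⟨?_, hn p hp hpn⟩
    rw [mem_range, Nat.lt_succ_iff, ← Nat.cast_le (α := ℝ)]
    exact (hn p hp hpn).2.trans (Nat.le_ceil z)
  refine (tsum_one_div_le_of_le_card_primeFactors hη hP hA fun n hn ↦ hn.2.2).trans ?_
  calc exp (η * (∑ p ∈ P, 1 / (p : ℝ) + 2)) / η ^ (η * β * log (log z))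
      ≤ exp (η * (β * log (log z) + C + 2)) / η ^ (η * β * log (log z)) := by gcongr
    _ = exp (η * (C + 2)) * log z ^ (β * (η - η * log η)) := by
        rw [rpow_def_of_pos hlogz, rpow_def_of_pos (by linarith), ← exp_sub, ← exp_add]
        ring_nf

open Classical Real in
/-- Rankin-type bound: if `∑_{p ∈ S, p ≤ z} 1/p ≤ β log log z + C`, then for `η ≥ 1`
the sum of `1/n` over integers `n` all of whose prime factors lie in `S_z`
and having `ω(n) ≥ η β log log z` is `≪_{C,η} (log z)^{β(η - η log η)}`. -/
theorem stmt_0 (C η : ℝ) (hC : 0 < C) (hη : 1 ≤ η) :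
    ∃ K : ℝ, 0 < K ∧
      ∀ (S : Set ℕ), (∀ p ∈ S, Nat.Prime p) →
      ∀ β z : ℝ, 0 < β → Real.exp 1 < z →
      (∑ p ∈ (Finset.range (⌈z⌉₊ + 1)).filter (fun p => p ∈ S ∧ (p : ℝ) ≤ z),
          (1 : ℝ) / p) ≤ β * Real.log (Real.log z) + C →
      (∑' n : {n : ℕ // 0 < n ∧ (∀ p : ℕ, p.Prime → p ∣ n → p ∈ S ∧ (p : ℝ) ≤ z) ∧
            η * β * Real.log (Real.log z) ≤ (n.primeFactors.card : ℝ)},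
          (1 : ℝ) / (n : ℕ))
        ≤ K * (Real.log z) ^ (β * (η - η * Real.log η)) :=
  stmt_0_general C η hη
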